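/- For every nonzero vector q ∈ ℝ³, the sequence of normalized vectors (T·R)^t·q / ‖(T·R)^t·q‖ (t = 1, 2, 3, ...) converges, as t → ∞, to û or to −û, where û = u/‖u‖ is the normalized eigenvector u = (1,-2,1) of T·R. -/

import Mathlib

open Matrix Filter

/-- The matrix `R`. -/
def R : Matrix (Fin 3) (Fin 3) ℝ := !![0,0,-1; 1,0,-1; 0,1,-1]

/-- The matrix `T`. -/
def T : Matrix (Fin 3) (Fin 3) ℝ := !![-1,0,0; 2,1,0; -4,0,1]

/-- The eigenvector `u = (1,-2,1)` of `T·R`. -/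
def u : Fin 3 → ℝ := ![1,-2,1]

/-- The Euclidean norm on `ℝ³`. -/
noncomputable def enorm3 (p : Fin 3 → ℝ) : ℝ :=
  Real.sqrt (p 0 ^ 2 + p 1 ^ 2 + p 2 ^ 2)

noncomputable def gn (v : Fin 3 → ℝ) : Fin 3 → ℝ := (enorm3 v)⁻¹ • v

lemma TR_eq : T * R = !![0,0,1; 1,0,-3; 0,1,3] := by
  ext i j; fin_cases i <;> fin_cases j <;>
    simp [T, R, Matrix.mul_apply, Fin.sum_univ_three] <;> norm_num

def Nv (q : Fin 3 → ℝ) : Fin 3 → ℝ := ![-q 0 + q 2, q 0 - q 1 - 3*q 2, q 1 + 2*q 2]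

lemma Nv_def (q : Fin 3 → ℝ) : Nv q = ![-q 0 + q 2, q 0 - q 1 - 3*q 2, q 1 + 2*q 2] := rfl

lemma key (q : Fin 3 → ℝ) (t : ℕ) :
    ((T * R) ^ t).mulVec q
      = q + (t:ℝ) • Nv q + ((t:ℝ)*((t:ℝ)-1)/2*(q 0 + q 1 + q 2)) • u := by
  induction t with
  | zero =>
      funext i; fin_cases i <;> simp [Nv, u] <;> ring
  | succ t ih =>
      rw [pow_succ', ← Matrix.mulVec_mulVec, ih]
      funext i; fin_cases i <;>
        simp [TR_eq, Matrix.mulVec, dotProduct, Fin.sum_univ_three, Nv, u, Matrix.vecHead, Matrix.vecTail] <;>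
        push_cast <;> ring

lemma enorm3_smul (c : ℝ) (v : Fin 3 → ℝ) : enorm3 (c • v) = |c| * enorm3 v := by
  unfold enorm3
  rw [show (c • v) 0 ^ 2 + (c • v) 1 ^ 2 + (c • v) 2 ^ 2
      = c ^ 2 * (v 0 ^ 2 + v 1 ^ 2 + v 2 ^ 2) by simp [Pi.smul_apply, smul_eq_mul]; ring,
    Real.sqrt_mul (sq_nonneg c), Real.sqrt_sq_eq_abs]

lemma enorm3_pos {v : Fin 3 → ℝ} (hv : v ≠ 0) : 0 < enorm3 v := by
  rw [enorm3, Real.sqrt_pos]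
  have h : ∃ i, v i ≠ 0 := by
    by_contra h
    push_neg at h
    exact hv (funext fun i => h i)
  obtain ⟨i, hi⟩ := h
  have hp : 0 < v i ^ 2 := (sq_nonneg _).lt_of_ne' (pow_ne_zero 2 hi)
  have h0 := sq_nonneg (v 0); have h1 := sq_nonneg (v 1); have h2 := sq_nonneg (v 2)
  fin_cases i <;> simp only [show ((⟨0, by omega⟩ : Fin 3) : Fin 3) = 0 from rfl, show ((⟨1, by omega⟩ : Fin 3) : Fin 3) = 1 from rfl, show ((⟨2, by omega⟩ : Fin 3) : Fin 3) = 2 from rfl] at hp <;> nlinarith [hp]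

lemma inv_mul_aux {c E : ℝ} (hc : c ≠ 0) : (c * E)⁻¹ * c = E⁻¹ := by
  rw [mul_inv, mul_comm c⁻¹ E⁻¹, mul_assoc, inv_mul_cancel₀ hc, mul_one]

lemma gn_smul_pos {c : ℝ} (hc : 0 < c) (v : Fin 3 → ℝ) : gn (c • v) = gn v := by
  unfold gn
  rw [enorm3_smul, abs_of_pos hc, smul_smul, inv_mul_aux hc.ne']

lemma gn_smul_neg {c : ℝ} (hc : c < 0) (v : Fin 3 → ℝ) : gn (c • v) = -gn v := by
  unfold gn
  rw [enorm3_smul, abs_of_neg hc, smul_smul,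
    show -c * enorm3 v = -(c * enorm3 v) by ring, inv_neg, neg_mul,
    inv_mul_aux hc.ne, neg_smul]

lemma continuous_enorm3 : Continuous enorm3 := by
  unfold enorm3
  exact Real.continuous_sqrt.comp (by continuity)

lemma tendsto_gn {w : ℕ → Fin 3 → ℝ} {L : Fin 3 → ℝ} (hL : L ≠ 0)
    (h : Tendsto w atTop (nhds L)) :
    Tendsto (fun t => gn (w t)) atTop (nhds (gn L)) := by
  have h1 : Tendsto (fun t => enorm3 (w t)) atTop (nhds (enorm3 L)) :=
    (continuous_enorm3.tendsto L).comp h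
  exact (h1.inv₀ (ne_of_gt (enorm3_pos hL))).smul h

lemma u_ne_zero : u ≠ 0 := by
  intro h
  have := congrFun h 0
  simp [u] at this

lemma conclude {c : ℝ} (hc : c ≠ 0) {F : ℕ → Fin 3 → ℝ}
    (h : Tendsto (fun t => gn (F t)) atTop (nhds (gn (c • u)))) :
    Tendsto (fun t => gn (F t)) atTop (nhds (gn u)) ∨
    Tendsto (fun t => gn (F t)) atTop (nhds (-gn u)) := by
  rcases hc.lt_or_gt with h1 | h1
  · right; rwa [gn_smul_neg h1 u] at h
  · left; rwa [gn_smul_pos h1 u] at h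

lemma main' (q : Fin 3 → ℝ) (hq : q ≠ 0) :
    Tendsto (fun t : ℕ => gn (((T * R) ^ t).mulVec q)) atTop (nhds (gn u)) ∨
    Tendsto (fun t : ℕ => gn (((T * R) ^ t).mulVec q)) atTop (nhds (-gn u)) := by
  set s : ℝ := q 0 + q 1 + q 2 with hs
  set n : Fin 3 → ℝ := Nv q with hn
  set F : ℕ → Fin 3 → ℝ :=
    fun t => q + (t:ℝ) • n + ((t:ℝ)*((t:ℝ)-1)/2*s) • u with hF
  have hgoal : (fun t : ℕ => gn (((T * R) ^ t).mulVec q)) = fun t => gn (F t) := by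
    funext t; rw [key]
  rw [hgoal]
  have hat : Tendsto (fun t : ℕ => (t:ℝ)) atTop atTop := tendsto_natCast_atTop_atTop
  have hat1 : Tendsto (fun t : ℕ => (t:ℝ) - 1) atTop atTop := by
    simpa [sub_eq_add_neg] using tendsto_atTop_add_const_right atTop (-1 : ℝ) hat
  rcases eq_or_ne s 0 with hs0 | hs0
  · -- s = 0
    rcases eq_or_ne (n 0) 0 with hn0 | hn0
    · -- q is a multiple of u
      have hq2 : q 2 = q 0 := by
        have := hn0; rw [hn, Nv_def] at this; simp at this; linarith
      have hq1 : q 1 = -2 * q 0 := by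
        rw [hs] at hs0; linarith
      have hqu : q = q 0 • u := by
        funext i; fin_cases i <;> simp [u] <;> linarith
      have hq0 : q 0 ≠ 0 := by
        intro h; apply hq; rw [hqu, h, zero_smul]
      have hnz : n = 0 := by
        rw [hn, Nv_def]; funext i; fin_cases i <;> simp <;> linarith
      have hFc : ∀ t : ℕ, F t = q 0 • u := by
        intro t; rw [hF, hnz, hs0]; simpa using hqu
      apply conclude hq0
      have : (fun t => gn (F t)) = fun _ => gn (q 0 • u) := by
        funext t; rw [hFc]
      rw [this]
      exact tendsto_const_nhds
    · -- n = n 0 • u, n 0 ≠ 0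
      have hq1 : q 1 = -q 0 - q 2 := by rw [hs] at hs0; linarith
      have hnu : n = n 0 • u := by
        rw [hn, Nv_def]; funext i; fin_cases i <;> simp [u] <;> linarith
      apply conclude hn0
      have hd1 : Tendsto (fun t : ℕ => ((t:ℝ))⁻¹) atTop (nhds 0) :=
        hat.inv_tendsto_atTop
      have hlim : Tendsto (fun t : ℕ => (t:ℝ)⁻¹ • q + ((t:ℝ)⁻¹ * (t:ℝ)) • n)
          atTop (nhds n) := by
        have h1 : Tendsto (fun t : ℕ => (t:ℝ)⁻¹ • q) atTop (nhds ((0:ℝ) • q)) :=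
          hd1.smul_const q
        have hd2 : Tendsto (fun t : ℕ => (t:ℝ)⁻¹ * (t:ℝ)) atTop (nhds 1) := by
          apply Tendsto.congr' _ tendsto_const_nhds
          filter_upwards [eventually_ge_atTop 1] with t ht
          have : (t:ℝ) ≠ 0 := by
            have : (1:ℝ) ≤ (t:ℝ) := by exact_mod_cast ht
            linarith
          rw [inv_mul_cancel₀ this]
        have h2 : Tendsto (fun t : ℕ => ((t:ℝ)⁻¹ * (t:ℝ)) • n) atTop (nhds ((1:ℝ) • n)) :=
          hd2.smul_const n
        have := h1.add h2
        rw [zero_smul, one_smul, zero_add] at this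
        exact this
      have hnne : n ≠ 0 := by rw [hnu]; exact smul_ne_zero hn0 u_ne_zero
      rw [show gn (n 0 • u) = gn n by rw [← hnu]]
      have := tendsto_gn hnne hlim
      apply Tendsto.congr' _ this
      filter_upwards [eventually_ge_atTop 1] with t ht
      have ht' : (1:ℝ) ≤ (t:ℝ) := by exact_mod_cast ht
      have htpos : (0:ℝ) < (t:ℝ)⁻¹ := by positivity
      have : (t:ℝ)⁻¹ • q + ((t:ℝ)⁻¹ * (t:ℝ)) • n = (t:ℝ)⁻¹ • F t := by
        rw [hF]; simp only [hs0, mul_zero, zero_smul, add_zero, smul_add, smul_smul]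
      rw [this, gn_smul_pos htpos]
  · -- s ≠ 0 : leading term dominates
    apply conclude hs0
    set c1 : ℕ → ℝ := fun t => 2 / ((t:ℝ) * ((t:ℝ) - 1)) with hc1
    have hmul : Tendsto (fun t : ℕ => (t:ℝ) * ((t:ℝ) - 1)) atTop atTop :=
      hat.atTop_mul_atTop₀ hat1
    have ha : Tendsto c1 atTop (nhds 0) := by
      have := hmul.inv_tendsto_atTop
      have h2 := this.const_mul (2:ℝ)
      simpa [hc1, div_eq_mul_inv] using h2
    have hb : Tendsto (fun t : ℕ => c1 t * (t:ℝ)) atTop (nhds 0) := by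
      have hbase : Tendsto (fun t : ℕ => 2 / ((t:ℝ) - 1)) atTop (nhds 0) := by
        have := hat1.inv_tendsto_atTop
        have h2 := this.const_mul (2:ℝ)
        simpa [div_eq_mul_inv] using h2
      apply Tendsto.congr' _ hbase
      filter_upwards [eventually_ge_atTop 1] with t ht
      have htne : (t:ℝ) ≠ 0 := by
        have : (1:ℝ) ≤ (t:ℝ) := by exact_mod_cast ht
        linarith
      rw [hc1]
      rw [div_mul_eq_mul_div, mul_comm (2:ℝ) (t:ℝ), mul_div_mul_left _ _ htne]
    have hc : Tendsto (fun t : ℕ => c1 t * ((t:ℝ) * ((t:ℝ) - 1) / 2 * s)) atTop (nhds s) := by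
      apply Tendsto.congr' _ tendsto_const_nhds
      filter_upwards [eventually_ge_atTop 2] with t ht
      have ht' : (2:ℝ) ≤ (t:ℝ) := by exact_mod_cast ht
      have hX : (t:ℝ) * ((t:ℝ) - 1) ≠ 0 := by
        have h1 : (0:ℝ) < (t:ℝ) := by linarith
        have h2 : (0:ℝ) < (t:ℝ) - 1 := by linarith
        positivity
      rw [hc1]
      have hX1 : (t:ℝ) - 1 ≠ 0 := by linarith
      field_simp
    have hlim : Tendsto (fun t : ℕ => c1 t • F t) atTop (nhds (s • u)) := by
      have hw : ∀ t : ℕ, c1 t • F t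
          = c1 t • q + (c1 t * (t:ℝ)) • n + (c1 t * ((t:ℝ) * ((t:ℝ) - 1) / 2 * s)) • u := by
        intro t; rw [hF, smul_add, smul_add, smul_smul, smul_smul]
      have h1 := ((ha.smul_const q).add (hb.smul_const n)).add (hc.smul_const u)
      rw [zero_smul, zero_smul, zero_add, zero_add] at h1
      exact h1.congr fun t => (hw t).symm
    have := tendsto_gn (smul_ne_zero hs0 u_ne_zero) hlim
    apply Tendsto.congr' _ this
    filter_upwards [eventually_ge_atTop 2] with t ht
    have ht' : (2:ℝ) ≤ (t:ℝ) := by exact_mod_cast ht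
    have hpos : 0 < c1 t := by
      rw [hc1]
      have h1 : (0:ℝ) < (t:ℝ) := by linarith
      have h2 : (0:ℝ) < (t:ℝ) - 1 := by linarith
      positivity
    rw [gn_smul_pos hpos]

/-- For every nonzero `q ∈ ℝ³`, the normalized vectors `(T·R)^t·q / ‖(T·R)^t·q‖`
converge, as `t → ∞`, to `û = u/‖u‖` or to `−û`. -/
theorem TR_pow_normalized_tendsto (q : Fin 3 → ℝ) (hq : q ≠ 0) :
    Tendsto (fun t : ℕ => (enorm3 (((T * R) ^ t).mulVec q))⁻¹ • ((T * R) ^ t).mulVec q)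
      atTop (nhds ((enorm3 u)⁻¹ • u)) ∨
    Tendsto (fun t : ℕ => (enorm3 (((T * R) ^ t).mulVec q))⁻¹ • ((T * R) ^ t).mulVec q)
      atTop (nhds (-((enorm3 u)⁻¹ • u))) := by
  simpa only [gn] using main' q hq
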